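/- arXiv:1010.4497 — 3 statements merged into one kernel-verified Lean document; each statement's English description precedes it below -/
import Mathlib

section
/- Let M = (V, D) be a proper set system and v ∈ V. If d_M < d_{M*v}, then the family of minimum-cardinality sets of M∂v equals the family of minimum-cardinality sets of M; if d_{M*v} < d_M, then the family of minimum-cardinality sets of M∂v equals that of M*v. In either case, no minimum-cardinality set of M∂v contains v, and d_{M∂v} = min(d_M, d_{M*v}). -/
/-!
The dual pivot is `M∂v = M △ E` with `E = {W ∈ M*v | v ∉ W}`, and every set of `E` has size at
least `d_{M*v}`. If `d_M < d_{M*v}`, the minimum sets of `M` are therefore neither removed nor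
undercut. If `d_{M*v} < d_M`, every minimum set of `M*v` avoids `v` (deleting `v` would give a
set of `M` of size below `d_M`), so lies in `E`, while all sets of `M` are larger. In both cases
the minimum sets avoid `v`, because deleting `v` from one would beat the other distance.
-/

open scoped symmDiff

variable {V : Type*} [DecidableEq V] [Fintype V]

/-- Distance from `X` to the set system with family `D`. -/
noncomputable def dSS (D : Set (Finset V)) (X : Finset V) : ℕ :=
  sInf ((fun Y => (X ∆ Y).card) '' D)

/-- Pivot (twist) of a set-system family on `X`. -/
def pivotSS (D : Set (Finset V)) (X : Finset V) : Set (Finset V) :=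
  (fun Y => Y ∆ X) '' D

/-- Loop complementation on `v`. -/
def lcSS (D : Set (Finset V)) (v : V) : Set (Finset V) :=
  D ∆ ((fun Z => Z ∪ {v}) '' {Z ∈ D | v ∉ Z})

/-- Dual pivot on `v`. -/
def dpSS (D : Set (Finset V)) (v : V) : Set (Finset V) :=
  D ∆ ((fun Z => Z \ {v}) '' {Z ∈ D | v ∈ Z})

/-- Delta-matroid: proper set system with the symmetric exchange axiom. -/
def DeltaMatroid (D : Set (Finset V)) : Prop :=
  D.Nonempty ∧ ∀ X ∈ D, ∀ Y ∈ D, ∀ u ∈ X ∆ Y, ∃ v ∈ X ∆ Y, X ∆ {u, v} ∈ D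

/-- Inclusion-minimal members. -/
def minFam (D : Set (Finset V)) : Set (Finset V) :=
  {X ∈ D | ∀ Y ∈ D, Y ⊆ X → Y = X}

/-- Inclusion-maximal members. -/
def maxFam (D : Set (Finset V)) : Set (Finset V) :=
  {X ∈ D | ∀ Y ∈ D, X ⊆ Y → Y = X}

/-- Members of minimum cardinality. -/
def minCardFam (D : Set (Finset V)) : Set (Finset V) :=
  {X ∈ D | ∀ Y ∈ D, X.card ≤ Y.card}

/-- Members of maximum cardinality. -/
def maxCardFam (D : Set (Finset V)) : Set (Finset V) :=
  {X ∈ D | ∀ Y ∈ D, Y.card ≤ X.card}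

/-- All members have the same cardinality. -/
def Equicardinal (F : Set (Finset V)) : Prop :=
  ∀ X ∈ F, ∀ Y ∈ F, X.card = Y.card

/-- Restriction of the family to subsets of `X`. -/
def restrictSS (D : Set (Finset V)) (X : Finset V) : Set (Finset V) :=
  {Y ∈ D | Y ⊆ X}

section MinCard

variable {F G : Set (Finset V)} {X : Finset V}

theorem dSS_empty (F : Set (Finset V)) : dSS F ∅ = sInf (Finset.card '' F) := by
  simp only [dSS, ← Finset.bot_eq_empty, bot_symmDiff]

theorem dSS_empty_le_card (hX : X ∈ F) : dSS F ∅ ≤ X.card :=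
  dSS_empty F ▸ Nat.sInf_le ⟨X, hX, rfl⟩

theorem exists_card_eq_dSS_empty (hF : F.Nonempty) : ∃ X ∈ F, X.card = dSS F ∅ :=
  dSS_empty F ▸ Nat.sInf_mem (hF.image Finset.card)

theorem card_eq_dSS_empty_of_mem_minCardFam (hX : X ∈ minCardFam F) : X.card = dSS F ∅ := by
  obtain ⟨Y, hY, hYcard⟩ := exists_card_eq_dSS_empty ⟨X, hX.1⟩
  exact le_antisymm (hYcard ▸ hX.2 Y hY) (dSS_empty_le_card hX.1)

theorem mem_minCardFam_of_card_eq (hX : X ∈ F) (hcard : X.card = dSS F ∅) :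
    X ∈ minCardFam F :=
  ⟨hX, fun _ hY => hcard ▸ dSS_empty_le_card hY⟩

theorem mem_minCardFam_iff : X ∈ minCardFam F ↔ X ∈ F ∧ X.card = dSS F ∅ :=
  ⟨fun hX => ⟨hX.1, card_eq_dSS_empty_of_mem_minCardFam hX⟩,
    fun hX => mem_minCardFam_of_card_eq hX.1 hX.2⟩

theorem minCardFam_nonempty (hF : F.Nonempty) : (minCardFam F).Nonempty := by
  obtain ⟨X, hX, hcard⟩ := exists_card_eq_dSS_empty hF
  exact ⟨X, mem_minCardFam_of_card_eq hX hcard⟩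

theorem dSS_empty_eq_of_minCardFam_eq (h : minCardFam F = minCardFam G) (hG : G.Nonempty) :
    dSS F ∅ = dSS G ∅ := by
  obtain ⟨X, hX⟩ := minCardFam_nonempty hG
  rw [← card_eq_dSS_empty_of_mem_minCardFam hX, ← card_eq_dSS_empty_of_mem_minCardFam (h ▸ hX)]

theorem minCardFam_symmDiff_of_forall_lt (hF : F.Nonempty)
    (hG : ∀ Y ∈ G, dSS F ∅ < Y.card) : minCardFam (F ∆ G) = minCardFam F := by
  have hlb : ∀ Y ∈ F ∆ G, dSS F ∅ ≤ Y.card := by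
    rintro Y (⟨hY, -⟩ | ⟨hY, -⟩)
    exacts [dSS_empty_le_card hY, (hG Y hY).le]
  obtain ⟨X₀, hX₀, hX₀card⟩ := exists_card_eq_dSS_empty hF
  have hX₀FG : X₀ ∈ F ∆ G := Or.inl ⟨hX₀, fun h => (hG X₀ h).ne' hX₀card⟩
  have hd : dSS (F ∆ G) ∅ = dSS F ∅ := by
    obtain ⟨Y, hY, hYcard⟩ := exists_card_eq_dSS_empty ⟨X₀, hX₀FG⟩
    exact le_antisymm (hX₀card ▸ dSS_empty_le_card hX₀FG) (hYcard ▸ hlb Y hY)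
  ext X
  simp only [mem_minCardFam_iff, hd, Set.mem_symmDiff]
  constructor
  · rintro ⟨⟨hX, -⟩ | ⟨hX, -⟩, hcard⟩
    exacts [⟨hX, hcard⟩, ((hG X hX).ne' hcard).elim]
  · rintro ⟨hX, hcard⟩
    exact ⟨Or.inl ⟨hX, fun h => (hG X h).ne' hcard⟩, hcard⟩

theorem minCardFam_eq_of_subset (hFG : F ⊆ G) (hG : minCardFam G ⊆ F) (hne : G.Nonempty) :
    minCardFam F = minCardFam G := by
  obtain ⟨Y, hY⟩ := minCardFam_nonempty hne
  ext X
  refine ⟨fun hX => ⟨hFG hX.1, fun Z hZ => (hX.2 Y (hG hY)).trans (hY.2 Z hZ)⟩,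
    fun hX => ⟨hG hX, fun Z hZ => hX.2 Z (hFG hZ)⟩⟩

end MinCard

section Pivot

variable {V : Type*} [DecidableEq V] {D : Set (Finset V)} {X : Finset V} {v : V}

theorem Finset.symmDiff_singleton_of_mem (hv : v ∈ X) : X ∆ {v} = X.erase v := by
  ext x
  by_cases hx : x = v <;> simp [Finset.mem_symmDiff, hx, hv]

theorem Finset.symmDiff_singleton_of_notMem (hv : v ∉ X) : X ∆ {v} = insert v X := by
  ext x
  by_cases hx : x = v <;> simp [Finset.mem_symmDiff, hx, hv]

theorem mem_pivotSS {S : Finset V} : X ∈ pivotSS D S ↔ X ∆ S ∈ D := by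
  constructor
  · rintro ⟨Y, hY, rfl⟩
    rwa [symmDiff_symmDiff_cancel_right]
  · exact fun h => ⟨X ∆ S, h, symmDiff_symmDiff_cancel_right S X⟩

theorem pivotSS_pivotSS (S : Finset V) : pivotSS (pivotSS D S) S = D := by
  ext X
  rw [mem_pivotSS, mem_pivotSS, symmDiff_symmDiff_cancel_right]

theorem erase_mem_pivotSS (hX : X ∈ D) (hv : v ∈ X) : X.erase v ∈ pivotSS D {v} :=
  ⟨X, hX, Finset.symmDiff_singleton_of_mem hv⟩

theorem dpSS_eq_symmDiff (D : Set (Finset V)) (v : V) :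
    dpSS D v = D ∆ {W ∈ pivotSS D {v} | v ∉ W} := by
  refine congrArg (D ∆ ·) (Set.ext fun W => ⟨?_, ?_⟩)
  · rintro ⟨Z, ⟨hZ, hv⟩, rfl⟩
    change Z \ {v} ∈ _
    rw [Finset.sdiff_singleton_eq_erase]
    exact ⟨erase_mem_pivotSS hZ hv, Finset.notMem_erase v Z⟩
  · rintro ⟨hW, hv⟩
    rw [mem_pivotSS, Finset.symmDiff_singleton_of_notMem hv] at hW
    refine ⟨insert v W, ⟨hW, Finset.mem_insert_self v W⟩, ?_⟩
    exact (Finset.sdiff_singleton_eq_erase v _).trans (Finset.erase_insert hv)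

end Pivot

section DualPivot

variable {D : Set (Finset V)} {X : Finset V} {v : V}

theorem notMem_of_mem_minCardFam (hle : dSS D ∅ ≤ dSS (pivotSS D {v}) ∅)
    (hX : X ∈ minCardFam D) : v ∉ X := fun hv =>
  (calc dSS (pivotSS D {v}) ∅ ≤ (X.erase v).card := dSS_empty_le_card (erase_mem_pivotSS hX.1 hv)
      _ < X.card := Finset.card_erase_lt_of_mem hv
      _ = dSS D ∅ := card_eq_dSS_empty_of_mem_minCardFam hX).not_ge hle

theorem minCardFam_dpSS_of_lt (hD : D.Nonempty) (h : dSS D ∅ < dSS (pivotSS D {v}) ∅) :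
    minCardFam (dpSS D v) = minCardFam D := by
  rw [dpSS_eq_symmDiff]
  exact minCardFam_symmDiff_of_forall_lt hD fun W hW => h.trans_le (dSS_empty_le_card hW.1)

theorem minCardFam_dpSS_of_gt (hD : D.Nonempty) (h : dSS (pivotSS D {v}) ∅ < dSS D ∅) :
    minCardFam (dpSS D v) = minCardFam (pivotSS D {v}) := by
  set P := pivotSS D {v}
  set E := {W ∈ P | v ∉ W}
  have hP : P.Nonempty := hD.image _
  have hPE : minCardFam P ⊆ E := fun X hX =>
    ⟨hX.1, notMem_of_mem_minCardFam (by rw [pivotSS_pivotSS]; exact h.le) hX⟩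
  have hE : minCardFam E = minCardFam P := minCardFam_eq_of_subset (Set.sep_subset _ _) hPE hP
  have hdE : dSS E ∅ = dSS P ∅ := dSS_empty_eq_of_minCardFam_eq hE hP
  rw [dpSS_eq_symmDiff, symmDiff_comm, ← hE]
  exact minCardFam_symmDiff_of_forall_lt ((minCardFam_nonempty hP).mono hPE)
    fun Y hY => hdE ▸ h.trans_le (dSS_empty_le_card hY)

end DualPivot

/-- if `d_M < d_{M*v}` then `min_card(M∂v) = min_card(M)`;
if `d_{M*v} < d_M` then `min_card(M∂v) = min_card(M*v)`.  In either case no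
minimum-cardinality set of `M∂v` contains `v` and `d_{M∂v} = min(d_M, d_{M*v})`. -/
theorem minCard_dual_pivot (D : Set (Finset V)) (hD : D.Nonempty) (v : V) :
    (dSS D ∅ < dSS (pivotSS D {v}) ∅ → minCardFam (dpSS D v) = minCardFam D) ∧
    (dSS (pivotSS D {v}) ∅ < dSS D ∅ →
      minCardFam (dpSS D v) = minCardFam (pivotSS D {v})) ∧
    (dSS D ∅ ≠ dSS (pivotSS D {v}) ∅ →
      (∀ Z ∈ minCardFam (dpSS D v), v ∉ Z) ∧
      dSS (dpSS D v) ∅ = min (dSS D ∅) (dSS (pivotSS D {v}) ∅)) := by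
  refine ⟨minCardFam_dpSS_of_lt hD, minCardFam_dpSS_of_gt hD, fun hne => ?_⟩
  rcases hne.lt_or_gt with h | h
  · have hmin := minCardFam_dpSS_of_lt hD h
    refine ⟨fun Z hZ => notMem_of_mem_minCardFam h.le (hmin ▸ hZ), ?_⟩
    rw [dSS_empty_eq_of_minCardFam_eq hmin hD, min_eq_left h.le]
  · have hmin := minCardFam_dpSS_of_gt hD h
    have hle : dSS (pivotSS D {v}) ∅ ≤ dSS (pivotSS (pivotSS D {v}) {v}) ∅ := by
      rw [pivotSS_pivotSS]
      exact h.le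
    refine ⟨fun Z hZ => notMem_of_mem_minCardFam hle (hmin ▸ hZ), ?_⟩
    rw [dSS_empty_eq_of_minCardFam_eq hmin (hD.image _), min_eq_right h.le]
end

section
/- Let M = (V, D) be a proper set system. Then D is the set of bases of a matroid on ground set V if and only if both (1) D is equicardinal, and (2) for each X ⊆ V, the family of inclusion-minimal sets of M*X is equicardinal. -/
open scoped symmDiff

variable {V : Type*} [DecidableEq V] [Fintype V]

/-! `Y ∆ X` is minimal in `D * X` exactly when no other member of `D` lies between `Y ∩ X`
and `Y ∪ X`. For the bases of a matroid this says that `Y ∩ X` is a basis of `X`, so the minimal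
sets of `D * X` all have size `r(M) + |X| - 2 r(X)`. Conversely, given `A, B ∈ D` and
`a ∈ A \ B`, pivot on `X = (A ∪ B) \ {a}`: a minimal set below `B ∆ X` has fewer than `|B \ A|`
elements, so a minimal set below `A ∆ X = {a} ∪ (B \ A)` does too, and the member of `D` it
comes from is forced to be `A - a + b` for some `b ∈ B \ A`. -/

open Finset

section
variable {α : Type*}

theorem exists_mem_minFam_subset {F : Set (Finset α)} {Z : Finset α} (hZ : Z ∈ F) :
    ∃ S ∈ minFam F, S ⊆ Z := by
  obtain ⟨S, hSZ, hS⟩ := exists_minimal_le_of_wellFoundedLT (· ∈ F) Z hZ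
  exact ⟨S, ⟨hS.prop, fun _ hY hYS => hS.eq_of_le hY hYS⟩, hSZ⟩

theorem equicardinal_of_isBase_iff {M : Matroid α} {D : Set (Finset α)}
    (hD : ∀ B, M.IsBase B ↔ ∃ Y ∈ D, (Y : Set α) = B) : Equicardinal D := by
  intro A hA B hB
  have h := ((hD _).2 ⟨A, hA, rfl⟩).encard_eq_encard_of_isBase ((hD _).2 ⟨B, hB, rfl⟩)
  rwa [Set.encard_coe_eq_coe_finsetCard, Set.encard_coe_eq_coe_finsetCard, Nat.cast_inj] at h

variable [DecidableEq α]

theorem Finset.card_symmDiff_add_two_mul_card_inter (s t : Finset α) :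
    #(s ∆ t) + 2 * #(s ∩ t) = #s + #t := by
  have hs := card_sdiff_add_card_inter s t
  have ht := card_sdiff_add_card_inter t s
  rw [inter_comm] at ht
  rw [Finset.symmDiff_def, card_union_of_disjoint disjoint_sdiff_sdiff]
  omega

theorem Finset.symmDiff_subset_symmDiff_iff {s t u : Finset α} :
    t ∆ u ⊆ s ∆ u ↔ s ∩ u ⊆ t ∧ t ⊆ s ∪ u := by
  simp only [subset_iff, mem_symmDiff, mem_inter, mem_union]
  grind

theorem eq_of_mem_minFam_pivotSS {D : Set (Finset α)} {X Y Y' : Finset α}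
    (hY : Y ∆ X ∈ minFam (pivotSS D X)) (hY' : Y' ∈ D) (hinter : Y ∩ X ⊆ Y')
    (hunion : Y' ⊆ Y ∪ X) : Y' = Y :=
  symmDiff_left_injective X <|
    hY.2 _ ⟨Y', hY', rfl⟩ (symmDiff_subset_symmDiff_iff.2 ⟨hinter, hunion⟩)

section Matroid
variable {M : Matroid α} {D : Set (Finset α)}

theorem isBasis_inter_of_mem_minFam_pivotSS
    (hD : ∀ B, M.IsBase B ↔ ∃ Y ∈ D, (Y : Set α) = B) {X Y : Finset α}
    (hX : (X : Set α) ⊆ M.E) (hY : Y ∈ D) (hmin : Y ∆ X ∈ minFam (pivotSS D X)) :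
    M.IsBasis ↑(Y ∩ X) ↑X := by
  have hYbase : M.IsBase ↑Y := (hD _).2 ⟨Y, hY, rfl⟩
  have hYX : M.Indep ↑(Y ∩ X) := hYbase.indep.subset (coe_subset.2 inter_subset_left)
  obtain ⟨I, hI, hYXI⟩ := hYX.subset_isBasis_of_subset (coe_subset.2 inter_subset_right) hX
  obtain ⟨_, hB', hIB', hB'IY⟩ := hI.indep.exists_isBase_subset_union_isBase hYbase
  obtain ⟨Y', hY', rfl⟩ := (hD _).1 hB'
  have hY'Y : Y' = Y := by
    refine eq_of_mem_minFam_pivotSS hmin hY' (mod_cast hYXI.trans hIB') ?_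
    have : (Y' : Set α) ⊆ Y ∪ X := hB'IY.trans (Set.union_subset
      (hI.subset.trans Set.subset_union_right) Set.subset_union_left)
    exact_mod_cast this
  subst hY'Y
  rwa [show I = ↑(Y' ∩ X) from hYXI.antisymm' (by simpa using ⟨hIB', hI.subset⟩)] at hI

theorem equicardinal_minFam_pivotSS_of_isBase_iff
    (hD : ∀ B, M.IsBase B ↔ ∃ Y ∈ D, (Y : Set α) = B) {X : Finset α}
    (hX : (X : Set α) ⊆ M.E) : Equicardinal (minFam (pivotSS D X)) := by
  rintro _ hS₁ _ hS₂
  obtain ⟨Y₁, hY₁, rfl⟩ := hS₁.1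
  obtain ⟨Y₂, hY₂, rfl⟩ := hS₂.1
  have hinter : #(Y₁ ∩ X) = #(Y₂ ∩ X) := by
    have h := (isBasis_inter_of_mem_minFam_pivotSS hD hX hY₁ hS₁).encard_eq_encard
      (isBasis_inter_of_mem_minFam_pivotSS hD hX hY₂ hS₂)
    rwa [Set.encard_coe_eq_coe_finsetCard, Set.encard_coe_eq_coe_finsetCard, Nat.cast_inj] at h
  have h₁ := card_symmDiff_add_two_mul_card_inter Y₁ X
  have h₂ := card_symmDiff_add_two_mul_card_inter Y₂ X
  have := equicardinal_of_isBase_iff hD Y₁ hY₁ Y₂ hY₂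
  show #(Y₁ ∆ X) = #(Y₂ ∆ X)
  omega

end Matroid

theorem exists_insert_erase_mem_of_equicardinal {D : Set (Finset α)} (hD : Equicardinal D)
    (hmin : ∀ X, Equicardinal (minFam (pivotSS D X))) {A B : Finset α} (hA : A ∈ D)
    (hB : B ∈ D) {a : α} (ha : a ∈ A \ B) : ∃ b ∈ B \ A, insert b (A.erase a) ∈ D := by
  obtain ⟨haA, haB⟩ := mem_sdiff.1 ha
  set X := (A ∪ B).erase a
  have hAX : A ∆ X = insert a (B \ A) := by
    ext x; simp only [X, mem_symmDiff, mem_erase, mem_union, mem_insert, mem_sdiff]; grind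
  have hBX : B ∆ X = (A \ B).erase a := by
    ext x; simp only [X, mem_symmDiff, mem_erase, mem_union, mem_sdiff]; grind
  obtain ⟨S', hS', hS'B⟩ := exists_mem_minFam_subset (F := pivotSS D X) ⟨B, hB, rfl⟩
  obtain ⟨S, hS, hSA⟩ := exists_mem_minFam_subset (F := pivotSS D X) ⟨A, hA, rfl⟩
  obtain ⟨Y, hY, rfl⟩ := hS.1
  have hYlt : #(Y ∆ X) < #(B \ A) := calc
    #(Y ∆ X) = #S' := hmin X _ hS _ hS'
    _ ≤ #((A \ B).erase a) := hBX ▸ card_le_card hS'B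
    _ < #(A \ B) := card_erase_lt_of_mem ha
    _ = #(B \ A) := card_sdiff_comm (hD A hA B hB)
  have hAinter : A ∩ X = A.erase a := by
    ext x; simp only [X, mem_inter, mem_erase, mem_union]; grind
  have hAunion : A ∪ X = A ∪ B := by
    ext x; simp only [X, mem_erase, mem_union]; grind
  obtain ⟨hAY, hYAB⟩ := symmDiff_subset_symmDiff_iff.1 hSA
  rw [hAinter] at hAY
  rw [hAunion] at hYAB
  obtain ⟨c, hc, rfl⟩ : ∃ c ∉ A.erase a, insert c (A.erase a) = Y := by
    refine exists_eq_insert_iff.2 ⟨hAY, ?_⟩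
    rw [card_erase_add_one haA]
    exact hD A hA _ hY
  have hcAB : c ∈ A ∪ B := hYAB (mem_insert_self c _)
  by_cases hcA : c ∈ A
  · have hca : c = a := by simpa [hcA] using hc
    rw [hca, insert_erase haA, hAX, card_insert_of_notMem (by simp [haA])] at hYlt
    omega
  · exact ⟨c, mem_sdiff.2 ⟨(mem_union.1 hcAB).resolve_left hcA, hcA⟩, hY⟩

theorem exists_matroid_isBase_iff_of_exchange {D : Set (Finset α)} (hne : D.Nonempty)
    (hexch : ∀ A ∈ D, ∀ B ∈ D, ∀ a ∈ A \ B, ∃ b ∈ B \ A, insert b (A.erase a) ∈ D) :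
    ∃ M : Matroid α, M.E = Set.univ ∧
      ∀ B : Set α, M.IsBase B ↔ ∃ Y ∈ D, (Y : Set α) = B := by
  refine ⟨Matroid.ofExistsFiniteIsBase Set.univ (fun B => ∃ Y ∈ D, (Y : Set α) = B) ?_ ?_
    (fun _ _ => Set.subset_univ _), rfl, fun _ => Iff.rfl⟩
  · obtain ⟨Y, hY⟩ := hne
    exact ⟨Y, ⟨Y, hY, rfl⟩, Y.finite_toSet⟩
  · rintro _ _ ⟨A, hA, rfl⟩ ⟨B, hB, rfl⟩ a ha
    obtain ⟨b, hb, hbA⟩ := hexch A hA B hB a (mod_cast ha)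
    exact ⟨b, mod_cast hb, _, hbA, by simp⟩

end

/-- `D` is the set of bases of a matroid on ground set `V` iff `D`
is equicardinal and for each `X` the inclusion-minimal sets of `M*X` are
equicardinal. -/
theorem matroid_bases_iff (D : Set (Finset V)) (hD : D.Nonempty) :
    (∃ M : Matroid V, M.E = Set.univ ∧
        ∀ B : Set V, M.IsBase B ↔ ∃ Y ∈ D, (Y : Set V) = B) ↔
      (Equicardinal D ∧ ∀ X : Finset V, Equicardinal (minFam (pivotSS D X))) := by
  constructor
  · rintro ⟨M, hE, hbases⟩
    exact ⟨equicardinal_of_isBase_iff hbases,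
      fun X => equicardinal_minFam_pivotSS_of_isBase_iff hbases (hE ▸ Set.subset_univ _)⟩
  · rintro ⟨hcard, hmin⟩
    exact exists_matroid_isBase_iff_of_exchange hD fun A hA B hB _ ha =>
      exists_insert_erase_mem_of_equicardinal hcard hmin hA hB ha
end

section
/- Let M = (V, D) be a proper set system. Then M is a delta-matroid if and only if for all X, Y ⊆ V such that (M*Y)[X] is proper, d_{M*Y} = d_{(M*Y)[X]}, i.e., the minimum cardinality of a set in M*Y equals the minimum cardinality of a set of M*Y contained in X. -/
open scoped symmDiff

variable {V : Type*} [DecidableEq V] [Fintype V]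

/-!
A minimum-cardinality member `A` of a delta-matroid can be moved into any `X` that contains a
member `B`: exchanging some `u ∈ A \ X` against `B` must add an element `v ∈ B \ A ⊆ X`, since
removing elements would beat the minimum. As pivots preserve delta-matroids, this gives the
forward direction. Conversely, for `A, B ∈ D` and `u ∈ A ∆ B` pivot on `Y = A ∆ {u}`, so that
`{u}` and `(A ∆ B).erase u` are members; the condition with `X = (A ∆ B).erase u` yields a member
of size at most one inside `X`, i.e. `∅` or some `{v}`, and pivoting back gives `A ∆ {u, v} ∈ D`.
-/

section SetSystem

variable {D : Set (Finset V)}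

omit [Fintype V] in
theorem mem_pivotSS_iff {Y Z : Finset V} : Z ∈ pivotSS D Y ↔ Z ∆ Y ∈ D := by
  constructor
  · rintro ⟨W, hW, rfl⟩
    rwa [symmDiff_symmDiff_cancel_right]
  · exact fun h => ⟨Z ∆ Y, h, symmDiff_symmDiff_cancel_right Y Z⟩

omit [Fintype V] in
theorem dSS_empty_le_card_s7 {A : Finset V} (hA : A ∈ D) : dSS D ∅ ≤ A.card :=
  Nat.sInf_le ⟨A, hA, congrArg Finset.card (bot_symmDiff A)⟩

omit [Fintype V] in
theorem dSS_empty_eq_card {A : Finset V} (hA : A ∈ minCardFam D) : dSS D ∅ = A.card := by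
  refine le_antisymm (dSS_empty_le_card_s7 hA.1) (le_csInf ⟨_, A, hA.1, rfl⟩ ?_)
  rintro _ ⟨C, hC, rfl⟩
  dsimp only
  rw [← Finset.bot_eq_empty, bot_symmDiff]
  exact hA.2 C hC

omit [DecidableEq V] in
theorem exists_mem_minCardFam (hD : D.Nonempty) : ∃ A, A ∈ minCardFam D := by
  obtain ⟨A, hA, hmin⟩ := Set.exists_min_image D Finset.card (Set.toFinite D) hD
  exact ⟨A, hA, hmin⟩

omit [DecidableEq V] [Fintype V] in
theorem minCardFam_subset_restrictSS {A X : Finset V} (hA : A ∈ minCardFam D) (hAX : A ⊆ X) :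
    A ∈ minCardFam (restrictSS D X) :=
  ⟨⟨hA.1, hAX⟩, fun C hC => hA.2 C hC.1⟩

end SetSystem

namespace DeltaMatroid

variable {D : Set (Finset V)}

omit [Fintype V] in
theorem pivotSS (hD : DeltaMatroid D) (Y : Finset V) : DeltaMatroid (pivotSS D Y) := by
  obtain ⟨hne, hex⟩ := hD
  refine ⟨hne.image _, fun P hP Q hQ u hu => ?_⟩
  rw [mem_pivotSS_iff] at hP hQ
  have hPQ : (P ∆ Y) ∆ (Q ∆ Y) = P ∆ Q := by
    rw [symmDiff_symmDiff_symmDiff_comm, symmDiff_self, symmDiff_bot]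
  obtain ⟨v, hv, hPv⟩ := hex _ hP _ hQ u (hPQ ▸ hu)
  refine ⟨v, hPQ ▸ hv, mem_pivotSS_iff.2 ?_⟩
  rwa [symmDiff_right_comm]

omit [Fintype V] in
theorem exists_insert_erase_mem_minCardFam (hD : DeltaMatroid D) {A B : Finset V}
    (hA : A ∈ minCardFam D) (hB : B ∈ D) {u : V} (hu : u ∈ A \ B) :
    ∃ v ∈ B \ A, insert v (A.erase u) ∈ minCardFam D := by
  obtain ⟨huA, huB⟩ := Finset.mem_sdiff.1 hu
  obtain ⟨v, hvAB, hAv⟩ := hD.2 A hA.1 B hB u (Finset.mem_symmDiff.2 (Or.inl ⟨huA, huB⟩))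
  have hvA : v ∉ A := by
    intro hvA
    have hsub : A ∆ {u, v} ⊆ A.erase u := by
      rw [symmDiff_of_ge (Finset.insert_subset huA (Finset.singleton_subset_iff.2 hvA)),
        ← Finset.sdiff_singleton_eq_erase]
      exact Finset.sdiff_subset_sdiff le_rfl (by simp)
    exact (Finset.card_erase_lt_of_mem huA).not_ge
      ((hA.2 _ hAv).trans (Finset.card_le_card hsub))
  have hvB : v ∈ B := ((Finset.mem_symmDiff.1 hvAB).resolve_left fun h => hvA h.1).1
  have hvu : v ≠ u := fun h => hvA (h ▸ huA)
  have heq : A ∆ {u, v} = insert v (A.erase u) := by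
    ext x
    by_cases hxu : x = u <;> by_cases hxv : x = v <;> simp_all [Finset.mem_symmDiff]
  refine ⟨v, Finset.mem_sdiff.2 ⟨hvB, hvA⟩, heq ▸ hAv, fun C hC => ?_⟩
  rw [Finset.card_insert_of_notMem (by simp [hvA]), Finset.card_erase_add_one huA]
  exact hA.2 C hC

omit [Fintype V] in
theorem exists_mem_minCardFam_subset (hD : DeltaMatroid D) {A B X : Finset V}
    (hA : A ∈ minCardFam D) (hB : B ∈ D) (hBX : B ⊆ X) :
    ∃ A' ∈ minCardFam D, A' ⊆ X := by
  induction hn : (A \ X).card generalizing A with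
  | zero => exact ⟨A, hA, Finset.sdiff_eq_empty_iff_subset.1 (Finset.card_eq_zero.1 hn)⟩
  | succ n ih =>
    obtain ⟨u, huAX⟩ := Finset.card_pos.1 (by omega : 0 < (A \ X).card)
    have huB : u ∈ A \ B := by
      rw [Finset.mem_sdiff] at huAX ⊢
      exact ⟨huAX.1, fun h => huAX.2 (hBX h)⟩
    obtain ⟨v, hv, hA'⟩ := hD.exists_insert_erase_mem_minCardFam hA hB huB
    have hvX : v ∈ X := hBX (Finset.mem_sdiff.1 hv).1
    refine ih hA' ?_
    have : insert v (A.erase u) \ X = (A \ X).erase u := by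
      rw [Finset.insert_sdiff_of_mem _ hvX, Finset.erase_sdiff_comm]
    rw [this, Finset.card_erase_of_mem huAX, hn, Nat.add_sub_cancel]

theorem dSS_restrictSS_eq (hD : DeltaMatroid D) {X : Finset V}
    (hX : (restrictSS D X).Nonempty) : dSS D ∅ = dSS (restrictSS D X) ∅ := by
  obtain ⟨B, hB, hBX⟩ := hX
  obtain ⟨A, hA⟩ := exists_mem_minCardFam hD.1
  obtain ⟨A', hA', hA'X⟩ := hD.exists_mem_minCardFam_subset hA hB hBX
  rw [dSS_empty_eq_card hA', dSS_empty_eq_card (minCardFam_subset_restrictSS hA' hA'X)]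

end DeltaMatroid

theorem symmExchange_of_forall_dSS_restrictSS_eq {D : Set (Finset V)}
    (H : ∀ X Y : Finset V, (restrictSS (pivotSS D Y) X).Nonempty →
      dSS (pivotSS D Y) ∅ = dSS (restrictSS (pivotSS D Y) X) ∅)
    {A B : Finset V} (hA : A ∈ D) (hB : B ∈ D) {u : V} (hu : u ∈ A ∆ B) :
    ∃ v ∈ A ∆ B, A ∆ {u, v} ∈ D := by
  set Y := A ∆ {u} with hY
  set X := (A ∆ B).erase u
  have hBY : B ∆ Y = X := by
    rw [hY, ← symmDiff_assoc, symmDiff_comm B, symmDiff_of_ge (Finset.singleton_subset_iff.2 hu),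
      Finset.sdiff_singleton_eq_erase]
  have hBX : B ∆ Y ∈ restrictSS (pivotSS D Y) X :=
    ⟨mem_pivotSS_iff.2 (by rwa [symmDiff_symmDiff_cancel_right]), hBY.le⟩
  have hu_mem : {u} ∈ pivotSS D Y := by
    rwa [mem_pivotSS_iff, hY, symmDiff_comm A, symmDiff_symmDiff_cancel_left]
  obtain ⟨S, hS⟩ := exists_mem_minCardFam ⟨_, hBX⟩
  have hS_card : S.card ≤ 1 := by
    rw [← dSS_empty_eq_card hS, ← H X Y ⟨_, hBX⟩]
    exact dSS_empty_le_card_s7 hu_mem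
  have : Nonempty V := ⟨u⟩
  obtain ⟨w, hSw⟩ := Finset.card_le_one_iff_subset_singleton.1 hS_card
  have hSD : S ∆ Y ∈ D := mem_pivotSS_iff.1 hS.1.1
  rcases Finset.subset_singleton_iff.1 hSw with rfl | rfl
  · refine ⟨u, hu, ?_⟩
    rwa [Finset.pair_eq_singleton, ← bot_symmDiff (A ∆ {u}), Finset.bot_eq_empty]
  · obtain ⟨hwu, hw⟩ := Finset.mem_erase.1 (hS.1.2 (Finset.mem_singleton_self w))
    refine ⟨w, hw, ?_⟩
    have hpair : ({u, w} : Finset V) = {u} ∆ {w} := by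
      rw [(symmDiff_eq_sup _ _).2 (Finset.disjoint_singleton.2 hwu.symm)]
      rfl
    rwa [hpair, ← symmDiff_assoc, symmDiff_comm]

/-- `M` is a delta-matroid iff for all `X, Y` with `(M*Y)[X]`
proper, the minimum cardinality of a set in `M*Y` equals the minimum
cardinality of a set of `M*Y` contained in `X`. -/
theorem deltaMatroid_iff_dist_restrict (D : Set (Finset V)) (hD : D.Nonempty) :
    DeltaMatroid D ↔ ∀ X Y : Finset V, (restrictSS (pivotSS D Y) X).Nonempty →
      dSS (pivotSS D Y) ∅ = dSS (restrictSS (pivotSS D Y) X) ∅ :=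
  ⟨fun h _ Y hX => (h.pivotSS Y).dSS_restrictSS_eq hX,
    fun H => ⟨hD, fun _ hA _ hB _ hu => symmExchange_of_forall_dSS_restrictSS_eq H hA hB hu⟩⟩
end
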